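/- arXiv:2510.04425 — 7 statements merged into one kernel-verified Lean document; each statement's English description precedes it below -/
import Mathlib

section
/- Let h_1 ≥ h_2 ≥ ... ≥ h_{2t} ≥ 0 be reals that admit some partition into t pairs each summing to at most 1. Then the canonical pairing that matches the s-th largest with the (2t+1-s)-th largest item (for s = 1,...,t) also has every pair summing to at most 1. -/
open scoped Classical

theorem stmt1 (t : ℕ) (h : Fin (2 * t) → ℝ)
    (hnn : ∀ i, 0 ≤ h i)
    (hsort : ∀ i j : Fin (2 * t), i ≤ j → h j ≤ h i)
    (P : Fin (2 * t) → Fin t)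
    (hcard : ∀ b : Fin t, (Finset.univ.filter (fun i => P i = b)).card = 2)
    (hfeas : ∀ b : Fin t, ∑ i ∈ Finset.univ.filter (fun i => P i = b), h i ≤ 1)
    (s : Fin t) :
    h ⟨s.val, by have := s.isLt; omega⟩ + h ⟨2 * t - 1 - s.val, by have := s.isLt; omega⟩ ≤ 1 := by
  have hmem : ∀ i : Fin (2*t), i ∈ Finset.univ.filter (fun k => P k = P i) := by
    intro i; simp
  have hpart : ∀ i : Fin (2*t), ∃ j, j ≠ i ∧
      Finset.univ.filter (fun k => P k = P i) = {i, j} := by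
    intro i
    have hc := hcard (P i)
    have h1 : ((Finset.univ.filter (fun k => P k = P i)).erase i).card = 1 := by
      rw [Finset.card_erase_of_mem (hmem i), hc]
    obtain ⟨j, hj⟩ := Finset.card_eq_one.mp h1
    have hjmem : j ∈ (Finset.univ.filter (fun k => P k = P i)).erase i := by
      rw [hj]; simp
    refine ⟨j, (Finset.mem_erase.mp hjmem).1, ?_⟩
    have := Finset.insert_erase (hmem i)
    rw [← this, hj]
  choose g hg hblock using hpart
  -- properties of g
  have hPg : ∀ i, P (g i) = P i := by
    intro i
    have : g i ∈ Finset.univ.filter (fun k => P k = P i) := by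
      rw [hblock i]; simp
    simpa using this
  have hsum : ∀ i, h i + h (g i) ≤ 1 := by
    intro i
    have := hfeas (P i)
    rw [hblock i, Finset.sum_pair (Ne.symm (hg i))] at this
    exact this
  have huniq : ∀ i j, j ≠ i → P j = P i → j = g i := by
    intro i j hne hp
    have : j ∈ Finset.univ.filter (fun k => P k = P i) := by simp [hp]
    rw [hblock i] at this
    rcases Finset.mem_insert.mp this with h1 | h1
    · exact absurd h1 hne
    · simpa using h1
  have hgg : ∀ i, g (g i) = i := by
    intro i
    exact (huniq (g i) i (Ne.symm (hg i)) (hPg i).symm).symm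
  by_contra hcon
  push_neg at hcon
  set a : Fin (2*t) := ⟨s.val, by have := s.isLt; omega⟩ with ha
  set b : Fin (2*t) := ⟨2 * t - 1 - s.val, by have := s.isLt; omega⟩ with hb
  -- every i with i.val ≤ s.val has (g i).val > b.val
  have hmap : ∀ i : Fin (2*t), i.val ≤ s.val → b.val < (g i).val := by
    intro i hi
    by_contra hle
    push_neg at hle
    have h1 : h a ≤ h i := hsort i a (by simpa [Fin.le_def, ha] using hi)
    have h2 : h b ≤ h (g i) := hsort (g i) b (by simpa [Fin.le_def, hb] using hle)
    have := hsum i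
    linarith
  -- pigeonhole
  have hA : (Finset.univ.filter (fun i : Fin (2*t) => i ≤ a)) = Finset.Iic a := by
    ext x; simp
  have hC : (Finset.univ.filter (fun i : Fin (2*t) => b < i)) = Finset.Ioi b := by
    ext x; simp
  have hinj : Set.InjOn g ↑(Finset.univ.filter (fun i : Fin (2*t) => i ≤ a)) := by
    intro x hx y hy hxy
    have : g (g x) = g (g y) := by rw [hxy]
    rwa [hgg, hgg] at this
  have hmaps : ∀ i ∈ Finset.univ.filter (fun i : Fin (2*t) => i ≤ a),
      g i ∈ Finset.univ.filter (fun i : Fin (2*t) => b < i) := by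
    intro i hi
    simp only [Finset.mem_filter, Finset.mem_univ, true_and] at hi ⊢
    exact hmap i (by simpa [Fin.le_def, ha] using hi)
  have hcardle := Finset.card_le_card_of_injOn g hmaps hinj
  rw [hA, hC] at hcardle
  have c1 : (Finset.Iic a).card = s.val + 1 := by
    rw [Fin.card_Iic]
  have c2 : (Finset.Ioi b).card = s.val := by
    rw [Fin.card_Ioi]
    have := s.isLt; simp [hb]; omega
  rw [c1, c2] at hcardle
  omega
end

section
/- Suppose all items can be partitioned into K bundles, each of total size exactly 1 (with respect to a fixed size function s with values in (0,1]). Let F be the set of large-or-medium items that lie in a bundle containing no other medium item, and let H be the set of medium items lying in a bundle with exactly one other medium item, where large means size ≥ 2/3 and medium means size in (1/3, 2/3). If F ∪ H equals the set of all large and medium items, then |F| + |H|/2 ≤ K. -/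
open scoped Classical

theorem stmt4 {ι : Type*} [Fintype ι] (s : ι → ℝ) (hs : ∀ x, 0 < s x ∧ s x ≤ 1)
    (K : ℕ) (P : ι → Fin K)
    (hP : ∀ b : Fin K, ∑ x ∈ Finset.univ.filter (fun x => P x = b), s x = 1)
    (F H : Finset ι)
    (hF : F = Finset.univ.filter (fun e => 1/3 < s e ∧
        ∀ e', P e' = P e → e' ≠ e → ¬ (1/3 < s e' ∧ s e' < 2/3)))
    (hH : H = Finset.univ.filter (fun e => (1/3 < s e ∧ s e < 2/3) ∧
        (Finset.univ.filter (fun e' => P e' = P e ∧ e' ≠ e ∧ 1/3 < s e' ∧ s e' < 2/3)).card = 1))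
    (hFH : F ∪ H = Finset.univ.filter (fun e => 1/3 < s e)) :
    (F.card : ℝ) + (H.card : ℝ) / 2 ≤ K := by
  have hfib : ∀ b : Fin K, ∀ (S : Finset ι), (∀ x ∈ S, P x = b) → ∑ x ∈ S, s x ≤ 1 := by
    intro b S hS
    rw [← hP b]
    apply Finset.sum_le_sum_of_subset_of_nonneg
    · intro x hx; simp [hS x hx]
    · intro x _ _; exact (hs x).1.le
  have hFmem : ∀ e, e ∈ F ↔ (1/3 < s e ∧
      ∀ e', P e' = P e → e' ≠ e → ¬ (1/3 < s e' ∧ s e' < 2/3)) := by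
    intro e; rw [hF]; simp
  have hHmem : ∀ e, e ∈ H ↔ ((1/3 < s e ∧ s e < 2/3) ∧
      (Finset.univ.filter (fun e' => P e' = P e ∧ e' ≠ e ∧ 1/3 < s e' ∧ s e' < 2/3)).card = 1) := by
    intro e; rw [hH]; simp
  have hFcard : F.card = ∑ b : Fin K, (F.filter (fun x => P x = b)).card :=
    Finset.card_eq_sum_card_fiberwise (by intro x _; exact Finset.mem_univ _)
  have hHcard : H.card = ∑ b : Fin K, (H.filter (fun x => P x = b)).card :=
    Finset.card_eq_sum_card_fiberwise (by intro x _; exact Finset.mem_univ _)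
  have key : ∀ b : Fin K, ((F.filter (fun x => P x = b)).card : ℝ)
      + ((H.filter (fun x => P x = b)).card : ℝ)/2 ≤ 1 := by
    intro b
    by_cases hfe : (F.filter (fun x => P x = b)).Nonempty
    · obtain ⟨e, he⟩ := hfe
      rw [Finset.mem_filter] at he
      obtain ⟨heF, hePb⟩ := he
      rw [hFmem] at heF
      have hH0 : (H.filter (fun x => P x = b)) = ∅ := by
        rw [Finset.eq_empty_iff_forall_notMem]
        intro e' he'
        rw [Finset.mem_filter] at he'
        obtain ⟨he'H, he'P⟩ := he'
        rw [hHmem] at he'H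
        by_cases h : e' = e
        · subst h
          obtain ⟨-, hcard⟩ := he'H
          rw [Finset.card_eq_one] at hcard
          obtain ⟨a, ha⟩ := hcard
          have haa : a ∈ Finset.univ.filter
              (fun x => P x = P e' ∧ x ≠ e' ∧ 1/3 < s x ∧ s x < 2/3) :=
            ha ▸ Finset.mem_singleton_self a
          rw [Finset.mem_filter] at haa
          exact heF.2 a haa.2.1 haa.2.2.1 haa.2.2.2
        · exact heF.2 e' (by rw [he'P, hePb]) h he'H.1
      have hF1 : (F.filter (fun x => P x = b)) = {e} := by
        apply Finset.eq_singleton_iff_unique_mem.mpr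
        refine ⟨Finset.mem_filter.mpr ⟨(hFmem e).mpr heF, hePb⟩, ?_⟩
        intro x hx
        by_contra hne
        rw [Finset.mem_filter] at hx
        obtain ⟨hxF, hxP⟩ := hx
        rw [hFmem] at hxF
        have hx23 : 2/3 ≤ s x := by
          by_contra hlt
          push_neg at hlt
          exact heF.2 x (by rw [hxP, hePb]) hne ⟨hxF.1, hlt⟩
        have he23 : 2/3 ≤ s e := by
          by_contra hlt
          push_neg at hlt
          exact hxF.2 e (by rw [hePb, hxP]) (fun h => hne h.symm) ⟨heF.1, hlt⟩
        have hsum : s x + s e ≤ 1 := by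
          have h2 := hfib b {x, e} ?_
          · rwa [Finset.sum_pair hne] at h2
          · intro y hy
            rcases Finset.mem_insert.mp hy with h | h
            · subst h; exact hxP
            · rw [Finset.mem_singleton] at h; subst h; exact hePb
        linarith
      rw [hH0, hF1]
      norm_num
    · rw [Finset.not_nonempty_iff_eq_empty] at hfe
      rw [hfe]
      simp only [Finset.card_empty, Nat.cast_zero, zero_add]
      have hHsub : (H.filter (fun x => P x = b)) ⊆
          Finset.univ.filter (fun x => P x = b ∧ 1/3 < s x) := by
        intro x hx
        rw [Finset.mem_filter] at hx ⊢
        exact ⟨Finset.mem_univ x, hx.2, ((hHmem x).mp hx.1).1.1⟩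
      have hT : (Finset.univ.filter (fun x => P x = b ∧ 1/3 < s x)).card ≤ 2 := by
        by_contra hgt
        push_neg at hgt
        set T := Finset.univ.filter (fun x => P x = b ∧ 1/3 < s x) with hTdef
        have hsum1 : ∑ x ∈ T, s x ≤ 1 :=
          hfib b T (by intro x hx; exact (Finset.mem_filter.mp hx).2.1)
        have hsum2 : (T.card : ℝ) * (1/3) < ∑ x ∈ T, s x := by
          have h3 : ∑ _x ∈ T, (1/3 : ℝ) < ∑ x ∈ T, s x := by
            apply Finset.sum_lt_sum_of_nonempty
            · exact Finset.card_pos.mp (by omega)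
            · intro x hx; exact (Finset.mem_filter.mp hx).2.2
          simpa using h3
        have h4 : (3:ℝ) ≤ (T.card : ℝ) := by exact_mod_cast hgt
        nlinarith
      have hcardle : (H.filter (fun x => P x = b)).card ≤ 2 :=
        le_trans (Finset.card_le_card hHsub) hT
      have hcr : ((H.filter (fun x => P x = b)).card : ℝ) ≤ 2 := by exact_mod_cast hcardle
      linarith
  calc (F.card : ℝ) + (H.card : ℝ)/2
      = ∑ b : Fin K, (((F.filter (fun x => P x = b)).card : ℝ)
          + ((H.filter (fun x => P x = b)).card : ℝ)/2) := by
        rw [hFcard, hHcard]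
        push_cast
        rw [Finset.sum_add_distrib, Finset.sum_div]
    _ ≤ ∑ _b : Fin K, (1:ℝ) := Finset.sum_le_sum (fun b _ => key b)
    _ = K := by simp
end

section
/- Consider n agents and items sorted so that agent i's sizes satisfy s_i(e_1) ≥ s_i(e_2) ≥ ... ≥ s_i(e_m), with all sizes in (0,1]. In the round-robin allocation, agent n receives A_n = {e_{jn} : j ≥ 1, jn ≤ m}. Then s_i(A_n) ≥ (s_i(M) − (n−1))/n for every agent i, where s_i(M) is the total size of all items under s_i. -/
theorem stmt5 (n m : ℕ) (hn : 1 ≤ n) (s : Fin n → Fin m → ℝ)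
    (hrange : ∀ i e, 0 < s i e ∧ s i e ≤ 1)
    (hIDO : ∀ i : Fin n, ∀ e e' : Fin m, e ≤ e' → s i e' ≤ s i e) :
    ∀ i : Fin n,
      ((∑ e, s i e) - ((n : ℝ) - 1)) / n ≤
        ∑ e ∈ Finset.univ.filter (fun e : Fin m => n ∣ (e.val + 1)), s i e := by
  intro i
  have hnpos : 0 < n := hn
  have hnR : (0:ℝ) < n := by exact_mod_cast hnpos
  rw [div_le_iff₀ hnR]
  set D := Finset.univ.filter (fun e : Fin m => n ∣ (e.val + 1)) with hD
  set small := Finset.univ.filter (fun e : Fin m => e.val + 1 < n) with hsmall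
  set rest := Finset.univ.filter (fun e : Fin m => ¬ (e.val + 1 < n)) with hrest
  have hsplit : ∑ e, s i e = ∑ e ∈ small, s i e + ∑ e ∈ rest, s i e :=
    (Finset.sum_filter_add_sum_filter_not _ _ _).symm
  -- small part
  have hsmall_card : small.card ≤ n - 1 := by
    have h1 : small.card = (small.image (fun e => e.val)).card :=
      (Finset.card_image_of_injective _ (fun a b h => Fin.ext h)).symm
    rw [h1]
    have h2 : small.image (fun e => e.val) ⊆ Finset.range (n - 1) := by
      intro v hv
      simp only [Finset.mem_image, hsmall, Finset.mem_filter] at hv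
      obtain ⟨e, ⟨_, he⟩, rfl⟩ := hv
      simp only [Finset.mem_range]; omega
    calc (small.image (fun e => e.val)).card ≤ (Finset.range (n-1)).card :=
          Finset.card_le_card h2
      _ = n - 1 := Finset.card_range _
  have hsmall_sum : ∑ e ∈ small, s i e ≤ (n:ℝ) - 1 := by
    calc ∑ e ∈ small, s i e ≤ ∑ _e ∈ small, (1:ℝ) :=
          Finset.sum_le_sum (fun e _ => (hrange i e).2)
      _ = small.card := by simp
      _ ≤ ((n - 1 : ℕ) : ℝ) := by exact_mod_cast hsmall_card
      _ = (n:ℝ) - 1 := by rw [Nat.cast_sub hn]; simp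
  -- the representative map
  have hfmem : ∀ e : Fin m, (e.val + 1) / n * n - 1 < m := by
    intro e
    have h2 : (e.val + 1) / n * n ≤ e.val + 1 := Nat.div_mul_le_self _ _
    have := e.isLt
    omega
  set f : Fin m → Fin m := fun e => ⟨(e.val + 1) / n * n - 1, hfmem e⟩ with hf
  have hmaps : ∀ e ∈ rest, f e ∈ D := by
    intro e he
    simp only [hrest, Finset.mem_filter, Finset.mem_univ, true_and] at he
    simp only [hD, Finset.mem_filter, Finset.mem_univ, true_and, hf]
    have hq : 1 ≤ (e.val + 1) / n := (Nat.one_le_div_iff hnpos).mpr (by omega)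
    have hp : n ≤ (e.val + 1) / n * n := by
      calc n = 1 * n := (one_mul n).symm
        _ ≤ (e.val + 1) / n * n := Nat.mul_le_mul_right n hq
    have heq : (e.val + 1) / n * n - 1 + 1 = (e.val + 1) / n * n := by omega
    rw [heq]
    exact Dvd.intro_left _ rfl
  have hfib : ∑ d ∈ D, ∑ e ∈ rest.filter (fun e => f e = d), s i e = ∑ e ∈ rest, s i e :=
    Finset.sum_fiberwise_of_maps_to hmaps (s i)
  -- bound each fiber
  have hfiber : ∀ d ∈ D, ∑ e ∈ rest.filter (fun e => f e = d), s i e ≤ (n:ℝ) * s i d := by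
    intro d hd
    have hdpos : 0 ≤ s i d := le_of_lt (hrange i d).1
    have hle : ∀ e ∈ rest.filter (fun e => f e = d), s i e ≤ s i d := by
      intro e he
      simp only [Finset.mem_filter] at he
      obtain ⟨_, hfe⟩ := he
      apply hIDO i d e
      rw [← hfe]
      show ((e.val + 1) / n * n - 1 : ℕ) ≤ e.val
      have h2 : (e.val + 1) / n * n ≤ e.val + 1 := Nat.div_mul_le_self _ _
      omega
    have hcard : (rest.filter (fun e => f e = d)).card ≤ n := by
      have hsub : (rest.filter (fun e => f e = d)).image (fun e => e.val) ⊆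
          Finset.Ico d.val (d.val + n) := by
        intro v hv
        simp only [Finset.mem_image, Finset.mem_filter, hrest, Finset.mem_univ,
          true_and] at hv
        obtain ⟨e, ⟨hbig, hfe⟩, rfl⟩ := hv
        have hdval : d.val = (e.val + 1) / n * n - 1 := by
          rw [← hfe]
        have hq : 1 ≤ (e.val + 1) / n := (Nat.one_le_div_iff hnpos).mpr (by omega)
        have hdm : n * ((e.val + 1) / n) + (e.val + 1) % n = e.val + 1 :=
          Nat.div_add_mod _ _
        have hr : (e.val + 1) % n < n := Nat.mod_lt _ hnpos
        have hcomm : (e.val + 1) / n * n = n * ((e.val + 1) / n) := Nat.mul_comm _ _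
        rw [hcomm] at hdval
        have hp : n ≤ n * ((e.val + 1) / n) := Nat.le_mul_of_pos_right n hq
        simp only [Finset.mem_Ico]
        omega
      have h1 : (rest.filter (fun e => f e = d)).card =
          ((rest.filter (fun e => f e = d)).image (fun e => e.val)).card :=
        (Finset.card_image_of_injective _ (fun a b h => Fin.ext h)).symm
      rw [h1]
      calc ((rest.filter (fun e => f e = d)).image (fun e => e.val)).card
          ≤ (Finset.Ico d.val (d.val + n)).card := Finset.card_le_card hsub
        _ = n := by rw [Nat.card_Ico]; omega
    calc ∑ e ∈ rest.filter (fun e => f e = d), s i e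
        ≤ (rest.filter (fun e => f e = d)).card • s i d :=
          Finset.sum_le_card_nsmul _ _ _ hle
      _ = ((rest.filter (fun e => f e = d)).card : ℝ) * s i d := by
          rw [nsmul_eq_mul]
      _ ≤ (n:ℝ) * s i d := by
          apply mul_le_mul_of_nonneg_right _ hdpos
          exact_mod_cast hcard
  have hrest_sum : ∑ e ∈ rest, s i e ≤ (n:ℝ) * ∑ d ∈ D, s i d := by
    rw [← hfib, Finset.mul_sum]
    exact Finset.sum_le_sum hfiber
  linarith
end

section
/- Let a multiset H of items, each of size strictly greater than 1/3, be packable into |H| − k unit-capacity bins for some integer k ≥ 0. Then the 2k items of smallest size in H can be partitioned into k pairs, each pair having total size at most 1. -/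
/-!
Pair the `2k` smallest items from the outside in, counting from `0`: the `j`-th smallest with the
`(2k - 1 - j)`-th smallest. Since items exceed `1/3`, every bin holds at most two items, so a
packing into `|H| - k` bins has at least `k` two-item bins. If the `j`-th pair did not fit in a
bin, every two-item bin would either contain one of the `j` items smaller than the pair's smaller
member, or have both its items among the `2k - 2j - 1` items ranked between the two members (the
smaller one included). There are at most `j` bins of the first kind and, the bins being disjoint,
fewer than `k - j` of the second, which is too few.
-/

open scoped Classical

open Finset

lemma card_le_two_of_forall_gt_third {ι : Type*} {s : Finset ι} {h : ι → ℝ}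
    (hpos : ∀ i ∈ s, 1 / 3 < h i) (hsum : ∑ i ∈ s, h i ≤ 1) : #s ≤ 2 := by
  by_contra! hs
  have hne : s.Nonempty := card_pos.mp (by omega)
  have hlt : ∑ _i ∈ s, (1 / 3 : ℝ) < ∑ i ∈ s, h i := sum_lt_sum_of_nonempty hne hpos
  have hs' : (3 : ℝ) ≤ #s := by exact_mod_cast hs
  rw [sum_const, nsmul_eq_mul] at hlt
  linarith

section Fibers

variable {ι β : Type*} [Fintype ι] [DecidableEq β] (P : ι → β)

lemma card_le_card_add_card_filter_card_eq_two [Fintype β]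
    (hle : ∀ b, #{i | P i = b} ≤ 2) :
    Fintype.card ι ≤ Fintype.card β + #{b | #{i | P i = b} = 2} := by
  have hfiber : ∀ b, #{i | P i = b} ≤ 1 + if #{i | P i = b} = 2 then 1 else 0 := by
    intro b
    have := hle b
    split <;> omega
  calc Fintype.card ι = ∑ b, #{i | P i = b} :=
        card_eq_sum_card_fiberwise (fun i _ => mem_univ (P i))
    _ ≤ ∑ b, (1 + if #{i | P i = b} = 2 then 1 else 0) := sum_le_sum fun b _ => hfiber b
    _ = Fintype.card β + #{b | #{i | P i = b} = 2} := by
        rw [sum_add_distrib, ← card_filter, sum_const, smul_eq_mul, mul_one, card_univ]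

lemma two_mul_card_le_of_fiber_subset {D : Finset β} {W : Finset ι}
    (hD : ∀ b ∈ D, #{i | P i = b} = 2 ∧ ∀ i, P i = b → i ∈ W) : 2 * #D ≤ #W := by
  have hfiber : ∀ b ∈ D, {i ∈ W | P i ∈ D ∧ P i = b} = ({i | P i = b} : Finset ι) := by
    intro b hb
    ext i
    simp only [mem_filter, mem_univ, true_and]
    exact ⟨fun hi => hi.2.2, fun hi => ⟨(hD b hb).2 i hi, hi ▸ hb, hi⟩⟩
  calc 2 * #D = ∑ b ∈ D, #{i | P i = b} := by
        rw [sum_congr rfl fun b hb => (hD b hb).1, sum_const, smul_eq_mul, mul_comm]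
    _ = #{i ∈ W | P i ∈ D} := by
        rw [card_eq_sum_card_fiberwise (s := {i ∈ W | P i ∈ D}) fun i hi => (mem_filter.mp hi).2]
        refine sum_congr rfl fun b hb => ?_
        rw [filter_filter, hfiber b hb]
    _ ≤ #W := card_filter_le W _

lemma two_mul_card_le_of_meets_or_subset {D : Finset β} {T W : Finset ι}
    (hD : ∀ b ∈ D, #{i | P i = b} = 2 ∧ (b ∈ T.image P ∨ ∀ i, P i = b → i ∈ W)) :
    2 * #D ≤ 2 * #T + #W := by
  have hcover : D ⊆ T.image P ∪ {b ∈ D | ∀ i, P i = b → i ∈ W} := by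
    intro b hb
    rcases (hD b hb).2 with hT | hW
    · exact mem_union_left _ hT
    · exact mem_union_right _ (mem_filter.mpr ⟨hb, hW⟩)
  have hinside : 2 * #{b ∈ D | ∀ i, P i = b → i ∈ W} ≤ #W :=
    two_mul_card_le_of_fiber_subset P fun b hb =>
      ⟨(hD b (mem_filter.mp hb).1).1, (mem_filter.mp hb).2⟩
  have := (card_le_card hcover).trans (card_union_le _ _)
  have := card_image_le (s := T) (f := P)
  omega

end Fibers

/-- A two-item bin with both items at positions `≤ c` has them in `(a, c]`: if one of them were
at a position `≤ a`, the bin would weigh at least `h a + h c`. -/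
lemma two_mul_card_full_bins_le_of_one_lt_add {M : ℕ} {β : Type*} [Fintype β] [DecidableEq β]
    {h : Fin M → ℝ} (hsort : Antitone h) {P : Fin M → β}
    (hpack : ∀ b, ∑ i ∈ {i | P i = b}, h i ≤ 1) {a c : Fin M} (hac : 1 < h a + h c) :
    2 * #{b | #{i | P i = b} = 2} ≤ 2 * #(Ioi c) + #(Ioc a c) := by
  refine two_mul_card_le_of_meets_or_subset P fun b hb => ⟨(mem_filter.mp hb).2, ?_⟩
  obtain ⟨x, y, hxy, hfib⟩ := card_eq_two.mp (mem_filter.mp hb).2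
  have hx : P x = b := by simpa using hfib.ge (mem_insert_self x {y})
  have hy : P y = b := by simpa using hfib.ge (mem_insert_of_mem (mem_singleton_self y))
  have hsum : h x + h y ≤ 1 := by simpa [hfib, sum_pair hxy] using hpack b
  by_cases hbig : c < x ∨ c < y
  · left
    rcases hbig with hcx | hcy
    · exact mem_image.mpr ⟨x, mem_Ioi.mpr hcx, hx⟩
    · exact mem_image.mpr ⟨y, mem_Ioi.mpr hcy, hy⟩
  · right
    push Not at hbig
    have hax : a < x := by
      by_contra! hxa
      linarith [hsort hxa, hsort hbig.2]
    have hay : a < y := by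
      by_contra! hya
      linarith [hsort hya, hsort hbig.1]
    intro i hi
    have hi : i ∈ ({x, y} : Finset (Fin M)) := hfib ▸ mem_filter.mpr ⟨mem_univ i, hi⟩
    rcases mem_insert.mp hi with rfl | hi
    · exact mem_Ioc.mpr ⟨hax, hbig.1⟩
    · rw [mem_singleton.mp hi]
      exact mem_Ioc.mpr ⟨hay, hbig.2⟩

lemma exists_outsideIn_pairing {M k : ℕ} (hkM : 2 * k ≤ M) (h : Fin M → ℝ)
    (hpair : ∀ i (hi : i < k), h ⟨M - 2 * k + i, by omega⟩ + h ⟨M - 1 - i, by omega⟩ ≤ 1) :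
    ∃ Q : {i : Fin M // M ≤ i.val + 2 * k} → Fin k,
      (∀ b : Fin k, (Finset.univ.filter (fun x => Q x = b)).card = 2) ∧
      (∀ b : Fin k, ∑ x ∈ Finset.univ.filter (fun x => Q x = b), h x.val ≤ 1) := by
  let Q : {i : Fin M // M ≤ i.val + 2 * k} → Fin k := fun x =>
    ⟨min (x.1.val - (M - 2 * k)) (M - 1 - x.1.val), by have := x.1.isLt; have := x.2; omega⟩
  let lo (b : Fin k) : {i : Fin M // M ≤ i.val + 2 * k} :=
    ⟨⟨M - 2 * k + b, by omega⟩, by simp only; omega⟩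
  let hi (b : Fin k) : {i : Fin M // M ≤ i.val + 2 * k} :=
    ⟨⟨M - 1 - b, by omega⟩, by simp only; omega⟩
  have hne (b : Fin k) : lo b ≠ hi b := by
    simp only [lo, hi, ne_eq, Subtype.mk.injEq, Fin.mk.injEq]
    omega
  have hfiber (b : Fin k) : ({x | Q x = b} : Finset _) = {lo b, hi b} := by
    ext x
    have := b.isLt
    have := x.1.isLt
    have := x.2
    simp only [mem_filter, mem_univ, true_and, mem_insert, mem_singleton, Q, lo, hi,
      Fin.ext_iff, Subtype.ext_iff]
    omega
  refine ⟨Q, fun b => ?_, fun b => ?_⟩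
  · rw [hfiber, card_pair (hne b)]
  · rw [hfiber, sum_pair (hne b)]
    exact hpair b b.isLt

theorem stmt13 (M k : ℕ) (hk : k ≤ M) (h : Fin M → ℝ)
    (hrange : ∀ i, 1/3 < h i ∧ h i ≤ 1)
    (hsort : ∀ i j : Fin M, i ≤ j → h j ≤ h i)
    (P : Fin M → Fin (M - k))
    (hpack : ∀ b : Fin (M - k), ∑ i ∈ Finset.univ.filter (fun i => P i = b), h i ≤ 1) :
    ∃ Q : {i : Fin M // M ≤ i.val + 2 * k} → Fin k,
      (∀ b : Fin k, (Finset.univ.filter (fun x => Q x = b)).card = 2) ∧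
      (∀ b : Fin k, ∑ x ∈ Finset.univ.filter (fun x => Q x = b), h x.val ≤ 1) := by
  have hle : ∀ b, #{i | P i = b} ≤ 2 := fun b =>
    card_le_two_of_forall_gt_third (fun i _ => (hrange i).1) (hpack b)
  have hmany := card_le_card_add_card_filter_card_eq_two P hle
  have hfew : 2 * #{b | #{i | P i = b} = 2} ≤ #(univ : Finset (Fin M)) :=
    two_mul_card_le_of_fiber_subset P fun b hb => ⟨(mem_filter.mp hb).2, fun i _ => mem_univ i⟩
  simp only [Fintype.card_fin, card_univ] at hmany hfew
  refine exists_outsideIn_pairing (by omega) h fun i hi => ?_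
  by_contra! hbad
  have := two_mul_card_full_bins_le_of_one_lt_add hsort hpack hbad
  rw [Fin.card_Ioi, Fin.card_Ioc] at this
  simp only at this
  omega
end

section
/- In the identically-ordered round-robin allocation (agent i receives A_i = {e_{i+jn} : j ≥ 0, i+jn ≤ m} where sizes are non-increasing in the item index for every agent), for every agent i and every j ≤ i, the bin covering value of A_j under agent i's sizes is at least the bin covering value of A_n under agent i's sizes: v_i(A_j) ≥ v_i(A_n). -/
/-- `S` covers `κ` unit-capacity bins under weights `w`: there are `κ` pairwise
disjoint subsets of `S`, each of total weight at least 1. -/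
def Covers {ι : Type*} (w : ι → ℝ) (S : Finset ι) (κ : ℕ) : Prop :=
  ∃ C : Fin κ → Finset ι, (∀ b, C b ⊆ S) ∧
    (∀ b b', b ≠ b' → Disjoint (C b) (C b')) ∧ ∀ b, 1 ≤ ∑ x ∈ C b, w x

/-- The bin covering value: the maximum number of bins coverable by `S`. -/
noncomputable def coverVal {ι : Type*} (w : ι → ℝ) (S : Finset ι) : ℕ :=
  sSup {κ | Covers w S κ}

/-!
Shifting every item of `A_k` down by `k - j` positions is an injection into `A_j`, and since
sizes are non-increasing in the index it never decreases an item's size. Pushing a bin covering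
of `A_k` forward along this injection therefore gives a bin covering of `A_j` with as many bins.
-/

open Finset

lemma covers_zero {ι : Type*} (w : ι → ℝ) (S : Finset ι) : Covers w S 0 :=
  ⟨fun b => b.elim0, fun b => b.elim0, fun b => b.elim0, fun b => b.elim0⟩

lemma Covers.le_card {ι : Type*} {w : ι → ℝ} {S : Finset ι} {κ : ℕ} (h : Covers w S κ) :
    κ ≤ #S := by
  obtain ⟨C, hsub, hdisj, hsum⟩ := h
  have hne : ∀ b, (C b).Nonempty := fun b =>
    nonempty_iff_ne_empty.2 fun hb => absurd (hsum b) (by simp [hb])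
  choose x hx using hne
  have hinj : Set.InjOn x (univ : Finset (Fin κ)) := fun b _ b' _ hbb' => by
    by_contra hne
    exact disjoint_left.mp (hdisj b b' hne) (hx b) (hbb' ▸ hx b')
  simpa using card_le_card_of_injOn x (fun b _ => hsub b (hx b)) hinj

lemma Covers.image {ι ι' : Type*} [DecidableEq ι'] {w : ι → ℝ} {w' : ι' → ℝ}
    {S : Finset ι} {T : Finset ι'} {κ : ℕ} (h : Covers w S κ) (f : ι → ι')
    (hinj : Set.InjOn f S) (hmaps : Set.MapsTo f S T) (hw : ∀ x ∈ S, w x ≤ w' (f x)) :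
    Covers w' T κ := by
  obtain ⟨C, hsub, hdisj, hsum⟩ := h
  have hinjC : ∀ b, Set.InjOn f (C b) := fun b =>
    hinj.mono fun x hx => mem_coe.2 (hsub b hx)
  refine ⟨fun b => (C b).image f, fun b => ?_, fun b b' hbb' => ?_, fun b => ?_⟩
  · exact image_subset_iff.2 fun x hx => hmaps (mem_coe.2 (hsub b hx))
  · refine disjoint_left.2 fun y hy hy' => ?_
    obtain ⟨x, hx, rfl⟩ := mem_image.1 hy
    obtain ⟨x', hx', hxx'⟩ := mem_image.1 hy'
    rw [hinj (hsub b' hx') (hsub b hx) hxx'] at hx'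
    exact disjoint_left.1 (hdisj b b' hbb') hx hx'
  · calc (1 : ℝ) ≤ ∑ x ∈ C b, w x := hsum b
      _ ≤ ∑ x ∈ C b, w' (f x) := sum_le_sum fun x hx => hw x (hsub b hx)
      _ = ∑ y ∈ (C b).image f, w' y := (sum_image (hinjC b)).symm

lemma coverVal_le_coverVal_of_injOn {ι ι' : Type*} [DecidableEq ι'] {w : ι → ℝ}
    {w' : ι' → ℝ} {S : Finset ι} {T : Finset ι'} (f : ι → ι') (hinj : Set.InjOn f S)
    (hmaps : Set.MapsTo f S T) (hw : ∀ x ∈ S, w x ≤ w' (f x)) :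
    coverVal w S ≤ coverVal w' T :=
  csSup_le_csSup ⟨#T, fun _ hκ => hκ.le_card⟩ ⟨0, covers_zero w S⟩
    fun _ hκ => hκ.image f hinj hmaps hw

lemma Nat.sub_sub_mod_of_mod_eq {e n j k : ℕ} (hj : j < n) (hjk : j ≤ k) (he : e % n = k) :
    (e - (k - j)) % n = j := by
  have hdecomp : e - (k - j) = n * (e / n) + j := by
    have := Nat.div_add_mod e n
    omega
  rw [hdecomp, Nat.mul_add_mod, Nat.mod_eq_of_lt hj]

theorem coverVal_residueClass_le {m n j k : ℕ} {w : Fin m → ℝ} (hw : Antitone w)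
    (hk : k < n) (hjk : j ≤ k) :
    coverVal w (univ.filter fun e : Fin m => e.val % n = k) ≤
      coverVal w (univ.filter fun e : Fin m => e.val % n = j) := by
  have hle : ∀ e : Fin m, e.val % n = k → k ≤ e.val := fun e he => he ▸ Nat.mod_le _ _
  refine coverVal_le_coverVal_of_injOn (fun e => ⟨e.val - (k - j), by omega⟩)
    (fun e he e' he' hee' => Fin.ext ?_) (fun e he => ?_) (fun e _ => hw (Nat.sub_le _ _))
  · have hke := hle e (by simpa using he)
    have hke' := hle e' (by simpa using he')
    have hshift : e.val - (k - j) = e'.val - (k - j) := Fin.val_eq_of_eq hee'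
    omega
  · simpa using Nat.sub_sub_mod_of_mod_eq (by omega) hjk (by simpa using he)

theorem stmt15 (n m : ℕ) (hn : 1 ≤ n) (s : Fin n → Fin m → ℝ)
    (hIDO : ∀ i : Fin n, ∀ e e' : Fin m, e ≤ e' → s i e' ≤ s i e)
    (A : Fin n → Finset (Fin m))
    (hA : ∀ j : Fin n, A j = Finset.univ.filter (fun e : Fin m => e.val % n = j.val)) :
    ∀ i j : Fin n, j ≤ i →
      coverVal (s i) (A ⟨n - 1, by omega⟩) ≤ coverVal (s i) (A j) := by
  intro i j _
  rw [hA, hA]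
  exact coverVal_residueClass_le (hIDO i) (Nat.sub_lt hn one_pos) (Nat.le_sub_one_of_lt j.isLt)
end

section
/- Let items be arranged in an n-column arrangement by non-increasing size: column j contains the j-th, (2n−j+1)-th, (2n+j)-th, (4n−j+1)-th, ... largest items. Then for any set F of the |F| largest items, the number of items of F in any column j is either ⌊|F|/(2n)⌋·2, ⌊|F|/(2n)⌋·2 + 1, or ⌊|F|/(2n)⌋·2 + 2; in particular it is at most ⌈|F|/n⌉ + 1 and any two columns' counts differ by at most 2. -/
/-- The (0-based) column of the (0-based) rank `r` in the boustrophedon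
`n`-arrangement: column `j` receives ranks `j`, `2n-j-1`, `2n+j`, `4n-j-1`, …. -/
def snakeCol (n r : ℕ) : ℕ := if (r / n) % 2 = 0 then r % n else n - 1 - r % n

/-- Number of elements of the prefix of the `f` largest items whose rank lands
in column `j` of the `n`-arrangement. -/
def snakeCount (n f j : ℕ) : ℕ :=
  ((Finset.range f).filter (fun r => snakeCol n r = j)).card

lemma cnt (M a f : ℕ) (hM : 0 < M) (ha : a < M) :
    ((Finset.range f).filter (fun r => r % M = a)).card
      = f / M + if a < f % M then 1 else 0 := by
  have h := Nat.count_modEq_card f hM a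
  rw [Nat.count_eq_card_filter_range] at h
  simpa [Nat.ModEq, Nat.mod_eq_of_lt ha] using h

lemma colIff (n r j : ℕ) (hn : 1 ≤ n) (hj : j < n) :
    snakeCol n r = j ↔ (r % (2 * n) = j ∨ r % (2 * n) = 2 * n - 1 - j) := by
  have h2n : 0 < 2 * n := by omega
  set m := r % (2 * n) with hmdef
  have hm : m < 2 * n := Nat.mod_lt _ h2n
  have e1 : r % n = m % n := by
    conv_lhs => rw [← Nat.mod_add_div r (2 * n)]
    rw [hmdef, mul_comm 2 n, mul_assoc]
    simp [Nat.add_mul_mod_self_left]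
  have e2 : (r / n) % 2 = m / n := by
    have hrn : r / n = m / n + 2 * (r / (2 * n)) := by
      conv_lhs => rw [← Nat.mod_add_div r (2 * n)]
      rw [hmdef, mul_comm 2 n, mul_assoc, Nat.add_mul_div_left _ _ (by omega : 0 < n)]
    have hlt : m / n < 2 := (Nat.div_lt_iff_lt_mul (by omega : 0 < n)).2 (by omega)
    rw [hrn, Nat.add_mul_mod_self_left, Nat.mod_eq_of_lt hlt]
  rcases Nat.lt_or_ge m n with h | h
  · have d0 : m / n = 0 := Nat.div_eq_of_lt h
    have m0 : m % n = m := Nat.mod_eq_of_lt h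
    unfold snakeCol
    rw [e1, e2, d0, m0, if_pos (by norm_num)]
    omega
  · have d1 : m / n = 1 := by
      have h2 : m / n < 2 := (Nat.div_lt_iff_lt_mul (by omega : 0 < n)).2 (by omega)
      have h1 : 1 ≤ m / n := (Nat.le_div_iff_mul_le (by omega : 0 < n)).2 (by omega)
      omega
    have m1 : m % n = m - n := by
      have := Nat.mod_add_div m n
      rw [d1] at this; omega
    unfold snakeCol
    rw [e1, e2, d1, m1, if_neg (by norm_num)]
    omega

lemma snakeCount_eq (n f j : ℕ) (hn : 1 ≤ n) (hj : j < n) :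
    snakeCount n f j = 2 * (f / (2 * n))
      + ((if j < f % (2 * n) then 1 else 0)
        + (if 2 * n - 1 - j < f % (2 * n) then 1 else 0)) := by
  have h2n : 0 < 2 * n := by omega
  unfold snakeCount
  rw [Finset.filter_congr (fun r _ => colIff n r j hn hj)]
  rw [Finset.filter_or, Finset.card_union_of_disjoint (by
    rw [Finset.disjoint_left]
    intro a ha hb
    simp only [Finset.mem_filter] at ha hb
    omega)]
  rw [cnt (2 * n) j f h2n (by omega), cnt (2 * n) (2 * n - 1 - j) f h2n (by omega)]
  ring

theorem stmt18 (n f j : ℕ) (hn : 1 ≤ n) (hj : j < n) :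
    (snakeCount n f j = 2 * (f / (2 * n)) ∨ snakeCount n f j = 2 * (f / (2 * n)) + 1 ∨
      snakeCount n f j = 2 * (f / (2 * n)) + 2) ∧
    snakeCount n f j ≤ (f + n - 1) / n + 1 ∧
    ∀ j' < n, snakeCount n f j ≤ snakeCount n f j' + 2 := by
  have h2n : 0 < 2 * n := by omega
  have hdm : 2 * n * (f / (2 * n)) + f % (2 * n) = f := Nat.div_add_mod f (2 * n)
  have hml : f % (2 * n) < 2 * n := Nat.mod_lt _ h2n
  have key : ∀ i < n, snakeCount n f i = 2 * (f / (2 * n))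
      + ((if i < f % (2 * n) then 1 else 0)
        + (if 2 * n - 1 - i < f % (2 * n) then 1 else 0)) :=
    fun i hi => snakeCount_eq n f i hn hi
  have hj' := key j hj
  refine ⟨by split_ifs at hj' <;> omega, ?_, ?_⟩
  · have hle : ∀ k, k * n ≤ f + n - 1 → k ≤ (f + n - 1) / n := fun k hk =>
      (Nat.le_div_iff_mul_le (by omega)).2 hk
    set q := f / (2 * n) with hq
    set s := f % (2 * n) with hs
    obtain ⟨P, hP⟩ : ∃ P, P = 2 * n * q := ⟨_, rfl⟩
    have hPn1 : (2 * q + 1) * n = P + n := by rw [hP]; ring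
    have hPn0 : 2 * q * n = P := by rw [hP]; ring
    rw [← hP] at hdm
    have hA : 2 * q ≤ (f + n - 1) / n := hle _ (by rw [hPn0]; omega)
    have hB : n + 1 ≤ s → 2 * q + 1 ≤ (f + n - 1) / n := fun h =>
      hle _ (by rw [hPn1]; omega)
    split_ifs at hj' with h1 h2 h2
    · have := hB (by omega); omega
    · omega
    · omega
    · omega
  · intro j' hj'2
    have h2 := key j' hj'2
    split_ifs at hj' h2 <;> omega
end

section
/- Consider items with sizes in (0,1] that can be partitioned into N bundles each of total size exactly 1. Fix any subcollection B (a union of some of the items) that cannot be partitioned into κ parts each of total size at least 2/3, and suppose the large-and-medium items of B (sizes > 1/3) can be placed into at most κ bins each of total size at most 1. Then the total size of B is strictly less than κ, i.e., s(B) < κ. -/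
open scoped Classical

theorem stmt19 {ι : Type*} [Fintype ι] (s : ι → ℝ)
    (hs : ∀ x, 0 < s x ∧ s x ≤ 1) (N : ℕ) (P0 : ι → Fin N)
    (hP0 : ∀ b : Fin N, ∑ x ∈ Finset.univ.filter (fun x => P0 x = b), s x = 1)
    (B : Finset ι) (κ : ℕ)
    (hno : ¬ ∃ Q : ι → Fin κ, ∀ b : Fin κ, 2/3 ≤ ∑ x ∈ B.filter (fun x => Q x = b), s x)
    (hpack : ∃ R : ι → Fin κ, ∀ b : Fin κ,
      ∑ x ∈ (B.filter (fun x => 1/3 < s x)).filter (fun x => R x = b), s x ≤ 1) :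
    ∑ x ∈ B, s x < κ := by
  obtain ⟨R, hR⟩ := hpack
  -- κ = 0 case: R itself works as Q in hno
  rcases Nat.eq_zero_or_pos κ with hκ0 | hκpos
  · exact absurd ⟨R, fun b => absurd hκ0 (by subst hκ0; exact absurd b.2 (by simp))⟩ hno
  set L : Finset ι := B.filter (fun x => 1/3 < s x) with hL
  set S : Finset ι := B.filter (fun x => ¬ (1/3 < s x)) with hSdef
  have hBsplit : L ∪ S = B := Finset.filter_union_filter_not_eq _ B
  -- key invariant by induction on T ⊆ S
  have key : ∀ T : Finset ι, T ⊆ S → ∃ Q : ι → Fin κ,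
      (∀ b : Fin κ, 2/3 ≤ ∑ x ∈ (L ∪ T).filter (fun x => Q x = b), s x) ∨
      ((∀ b : Fin κ, ∑ x ∈ (L ∪ T).filter (fun x => Q x = b), s x ≤ 1) ∧
        ∃ b : Fin κ, ∑ x ∈ (L ∪ T).filter (fun x => Q x = b), s x < 2/3) := by
    intro T
    induction T using Finset.induction_on with
    | empty =>
      intro _
      refine ⟨R, ?_⟩
      simp only [Finset.union_empty]
      by_cases hall : ∀ b : Fin κ, 2/3 ≤ ∑ x ∈ L.filter (fun x => R x = b), s x
      · exact Or.inl hall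
      · push_neg at hall
        exact Or.inr ⟨hR, hall⟩
    | @insert a T ha ih =>
      intro hsub
      have hTsub : T ⊆ S := fun x hx => hsub (Finset.mem_insert_of_mem hx)
      have haS : a ∈ S := hsub (Finset.mem_insert_self a T)
      have haSmall : s a ≤ 1/3 := by
        have := (Finset.mem_filter.mp haS).2
        linarith [not_lt.mp this]
      have haL : a ∉ L := by
        intro h
        exact (Finset.mem_filter.mp haS).2 (Finset.mem_filter.mp h).2
      have haLT : a ∉ L ∪ T := by
        simp [haL, ha]
      obtain ⟨Q, hQ⟩ := ih hTsub
      have hunion : L ∪ insert a T = insert a (L ∪ T) := by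
        ext x; simp only [Finset.mem_insert, Finset.mem_union]; tauto
      rcases hQ with hall | ⟨hle, b0, hb0⟩
      · -- all bins already ≥ 2/3; adding a only increases
        refine ⟨Q, Or.inl fun b => ?_⟩
        refine le_trans (hall b) (Finset.sum_le_sum_of_subset_of_nonneg ?_
          (fun x _ _ => (hs x).1.le))
        intro x hx
        rw [hunion]
        rcases Finset.mem_filter.mp hx with ⟨hx1, hx2⟩
        exact Finset.mem_filter.mpr ⟨Finset.mem_insert_of_mem hx1, hx2⟩
      · -- put a into bin b0
        set Q' : ι → Fin κ := Function.update Q a b0 with hQ'def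
        have hsame : ∀ b, (L ∪ T).filter (fun x => Q' x = b) =
            (L ∪ T).filter (fun x => Q x = b) := by
          intro b
          apply Finset.filter_congr
          intro x hx
          have hxa : x ≠ a := fun h => haLT (h ▸ hx)
          simp [hQ'def, Function.update_of_ne hxa]
        have hQa : Q' a = b0 := Function.update_self a b0 Q
        have hnew : ∀ b, ∑ x ∈ (L ∪ insert a T).filter (fun x => Q' x = b), s x =
            (if Q' a = b then s a else 0) + ∑ x ∈ (L ∪ T).filter (fun x => Q x = b), s x := by
          intro b
          rw [hunion, Finset.filter_insert]
          by_cases h : Q' a = b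
          · rw [if_pos h, Finset.sum_insert (fun hc => haLT (Finset.mem_filter.mp hc).1),
              if_pos h, hsame]
          · rw [if_neg h, if_neg h, hsame, zero_add]
        refine ⟨Q', ?_⟩
        by_cases hall : ∀ b : Fin κ, 2/3 ≤ ∑ x ∈ (L ∪ insert a T).filter (fun x => Q' x = b), s x
        · exact Or.inl hall
        · push_neg at hall
          refine Or.inr ⟨fun b => ?_, hall⟩
          rw [hnew]
          by_cases h : Q' a = b
          · rw [if_pos h]
            have : b = b0 := by rw [← h, hQa]
            subst this
            linarith
          · rw [if_neg h, zero_add]; exact hle b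
  obtain ⟨Q, hQ⟩ := key S (le_refl S)
  rw [hBsplit] at hQ
  rcases hQ with hall | ⟨hle, b0, hb0⟩
  · exact absurd ⟨Q, hall⟩ hno
  · have hsum : ∑ b : Fin κ, ∑ x ∈ B.filter (fun x => Q x = b), s x = ∑ x ∈ B, s x :=
      Finset.sum_fiberwise B Q s
    rw [← hsum]
    calc ∑ b : Fin κ, ∑ x ∈ B.filter (fun x => Q x = b), s x
        < ∑ _b : Fin κ, (1 : ℝ) := by
          apply Finset.sum_lt_sum (fun b _ => hle b)
          exact ⟨b0, Finset.mem_univ b0, by linarith⟩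
      _ = κ := by simp
end
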